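/- For every integer n ≥ 0, the weighted Genocchi number f(n) := ∑_{s̄} H(s̄)·G(s̄), where the sum is over all pivoting-equivalence classes s̄ of complete binary trees with 2n+1 vertices and G(s̄) := (n+1)·T(s̄)/2^{2n}, satisfies f(n) = (1·3·5⋯(2n-1))^2 · (2n+1) = (2n-1)!!·(2n+1)!!. -/

import Mathlib

/-!
The hook length formula for binary trees, `H(s) · #L(s) = |s|!`, holds because an increasing
labelling of `node l r` by a label set `A` puts `min A` at the root and is otherwise a choice of
the `|l|`-element label set of the left subtree together with increasing labellings of both
subtrees; this gives the recursion `#L = (|l|+|r| choose |l|) · #L(l) · #L(r)`. Hence every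
complete tree with `2n+1` vertices contributes `(2n+1)!`. Removing the leaves identifies these
trees with the binary trees with `n` nodes, counted by the Catalan number `Cₙ`, and
`(n+1) Cₙ (2n+1)! = (2n choose n) (2n+1)! = 4ⁿ (2n-1)‼ (2n+1)‼`.
-/

/-- Binary trees: every vertex has an ordered pair of (possibly empty) subtrees.
`nil` is the empty tree; vertices are the `node` constructors. -/
inductive BTree : Type
  | nil : BTree
  | node : BTree → BTree → BTree
deriving DecidableEq

/-- The number of vertices of a binary tree. -/
def BTree.size : BTree → ℕ
  | .nil => 0
  | .node l r => 1 + l.size + r.size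

/-- The product of the hook lengths of all vertices of a binary tree, where the
hook length of a vertex is the number of its descendants (including itself). -/
def BTree.hookProd : BTree → ℕ
  | .nil => 1
  | .node l r => (BTree.node l r).size * l.hookProd * r.hookProd

/-- A binary tree is complete if for every vertex the two subtrees are either
both empty or both nonempty. -/
inductive BTree.Complete : BTree → Prop
  | nil : BTree.Complete .nil
  | leaf : BTree.Complete (.node .nil .nil)
  | node {l r : BTree} : l ≠ .nil → r ≠ .nil → l.Complete → r.Complete →
      BTree.Complete (.node l r)

/-- A basic pivoting: the exchange of the two subtrees of a non-leaf vertex. -/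
inductive BTree.Pivot : BTree → BTree → Prop
  | swap {l r : BTree} : l ≠ .nil → r ≠ .nil → BTree.Pivot (.node l r) (.node r l)
  | left {l l' : BTree} (r : BTree) : BTree.Pivot l l' →
      BTree.Pivot (.node l r) (.node l' r)
  | right (l : BTree) {r r' : BTree} : BTree.Pivot r r' →
      BTree.Pivot (.node l r) (.node l r')

/-- Two binary trees are pivoting-equivalent if one is obtained from the other by a
finite sequence of basic pivotings. -/
def BTree.PivotEquiv : BTree → BTree → Prop := Relation.ReflTransGen BTree.Pivot

/-- Labelled binary trees: every vertex carries a natural number label. -/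
inductive LBTree : Type
  | nil : LBTree
  | node : ℕ → LBTree → LBTree → LBTree

/-- The underlying (unlabelled) shape of a labelled binary tree. -/
def LBTree.shape : LBTree → BTree
  | .nil => .nil
  | .node _ l r => .node l.shape r.shape

/-- The multiset of labels of a labelled binary tree. -/
def LBTree.labels : LBTree → Multiset ℕ
  | .nil => 0
  | .node a l r => a ::ₘ (l.labels + r.labels)

/-- A labelled binary tree is increasing if the label of each vertex is smaller
than the labels of all its descendants. -/
inductive LBTree.Increasing : LBTree → Prop
  | nil : LBTree.Increasing .nil
  | node {a : ℕ} {l r : LBTree} :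
      (∀ b ∈ l.labels, a < b) → (∀ b ∈ r.labels, a < b) →
      l.Increasing → r.Increasing → LBTree.Increasing (.node a l r)

/-- `lcount s` is the number of increasing labellings of the binary tree `s`
by the labels `{1, …, size s}`. -/
noncomputable def lcount (s : BTree) : ℕ :=
  {l : LBTree | l.shape = s ∧
      l.labels = Multiset.map (· + 1) (Multiset.range s.size) ∧
      l.Increasing}.ncard

/-- `Tbar s` is the total number of increasing labelled binary trees whose shape is
pivoting-equivalent to `s`, i.e. `T(s̄) = ∑_{s' ∈ s̄} #L(s')`. -/
noncomputable def Tbar (s : BTree) : ℕ :=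
  ∑ᶠ s' ∈ {s' | BTree.PivotEquiv s s'}, lcount s'

open Finset
open scoped Nat

deriving instance DecidableEq for LBTree

theorem LBTree.increasing_node_iff {a : ℕ} {l r : LBTree} :
    (node a l r).Increasing ↔
      (∀ b ∈ l.labels, a < b) ∧ (∀ b ∈ r.labels, a < b) ∧ l.Increasing ∧ r.Increasing :=
  ⟨fun | .node hl hr il ir => ⟨hl, hr, il, ir⟩, fun ⟨hl, hr, il, ir⟩ => .node hl hr il ir⟩

theorem LBTree.card_labels (t : LBTree) : Multiset.card t.labels = t.shape.size := by
  induction t with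
  | nil => rfl
  | node a l r ihl ihr =>
    simp only [labels, shape, BTree.size, Multiset.card_cons, Multiset.card_add, ihl, ihr]
    ring

namespace Finset

section DecidableEq

variable {α : Type*} [DecidableEq α]

theorem val_eq_cons_iff {A : Finset α} {a : α} {M : Multiset α} :
    A.val = a ::ₘ M ↔ a ∈ A ∧ (A.erase a).val = M := by
  constructor
  · intro h
    have ha : a ∈ A := by rw [← mem_val, h]; exact Multiset.mem_cons_self a M
    exact ⟨ha, by rw [erase_val, h, Multiset.erase_cons_head]⟩
  · rintro ⟨ha, rfl⟩
    rw [erase_val, Multiset.cons_erase (mem_val.mpr ha)]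

theorem val_eq_add_iff {B : Finset α} {X Y : Multiset α} :
    B.val = X + Y ↔ ∃ S ⊆ B, X = S.val ∧ Y = (B \ S).val := by
  constructor
  · intro h
    have hX : X ≤ B.val := h ▸ Multiset.le_add_right X Y
    refine ⟨⟨X, Multiset.nodup_of_le hX B.nodup⟩, val_le_iff.mp hX, rfl, ?_⟩
    change Y = B.val - X
    rw [h, add_tsub_cancel_left]
  · rintro ⟨S, hS, rfl, rfl⟩
    rw [sdiff_val, add_tsub_cancel_of_le (val_le_iff.mpr hS)]

end DecidableEq

theorem min'_eq_iff_forall_erase_lt {α : Type*} [LinearOrder α] {A : Finset α} (hA : A.Nonempty)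
    {a : α} (ha : a ∈ A) : A.min' hA = a ↔ ∀ b ∈ A.erase a, a < b := by
  rw [min'_eq_iff]
  constructor
  · rintro ⟨-, hle⟩ b hb
    exact (hle b (mem_of_mem_erase hb)).lt_of_ne (ne_of_mem_erase hb).symm
  · intro hlt
    refine ⟨ha, fun b hb => ?_⟩
    rcases eq_or_ne b a with rfl | hba
    exacts [le_rfl, (hlt b (mem_erase_of_ne_of_mem hba hb)).le]

end Finset

def incLabellings : BTree → Finset ℕ → Finset LBTree
  | .nil, A => if A = ∅ then {.nil} else ∅
  | .node l r, A =>
    if h : A.Nonempty then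
      ((A.erase (A.min' h)).powersetCard l.size).biUnion fun S =>
        (incLabellings l S ×ˢ incLabellings r (A.erase (A.min' h) \ S)).image
          fun p => .node (A.min' h) p.1 p.2
    else ∅

theorem mem_incLabellings {s : BTree} {A : Finset ℕ} {t : LBTree} :
    t ∈ incLabellings s A ↔ t.shape = s ∧ t.labels = A.val ∧ t.Increasing := by
  induction s generalizing A t with
  | nil =>
    cases t <;> by_cases hA : A = ∅ <;>
      simp [incLabellings, hA, LBTree.shape, LBTree.labels, LBTree.Increasing.nil,
        eq_comm (a := (0 : Multiset ℕ))]
  | node l r ihl ihr =>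
    cases t with
    | nil => rw [incLabellings]; split_ifs <;> simp [LBTree.shape]
    | node a tl tr =>
      rw [incLabellings]
      simp only [LBTree.shape, BTree.node.injEq, LBTree.labels, LBTree.increasing_node_iff]
      split_ifs with hA
      · simp only [mem_biUnion, mem_image, mem_product, mem_powersetCard, Prod.exists,
          LBTree.node.injEq, ihl, ihr]
        constructor
        · rintro ⟨S, ⟨hS, -⟩, tl, tr, ⟨⟨hsl, hSl, il⟩, hsr, hSr, ir⟩, rfl, rfl, rfl⟩
          have hlt := (min'_eq_iff_forall_erase_lt hA (A.min'_mem hA)).mp rfl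
          refine ⟨⟨hsl, hsr⟩, ?_, fun b hb => hlt b (hS (by rwa [hSl] at hb)),
            fun b hb => hlt b (sdiff_subset (by rwa [hSr] at hb)), il, ir⟩
          rw [eq_comm, val_eq_cons_iff, val_eq_add_iff]
          exact ⟨A.min'_mem hA, S, hS, hSl, hSr⟩
        · rintro ⟨⟨hsl, hsr⟩, hlab, hltl, hltr, il, ir⟩
          obtain ⟨haA, hE⟩ := val_eq_cons_iff.mp hlab.symm
          obtain ⟨S, hS, hSl, hSr⟩ := val_eq_add_iff.mp hE
          have hmin : A.min' hA = a := by
            refine (min'_eq_iff_forall_erase_lt hA haA).mpr fun b hb => ?_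
            rcases Multiset.mem_add.mp (hE ▸ mem_val.mpr hb) with hb | hb
            exacts [hltl b hb, hltr b hb]
          subst hmin
          refine ⟨S, ⟨hS, ?_⟩, tl, tr, ⟨⟨hsl, hSl, il⟩, hsr, hSr, ir⟩, rfl, rfl, rfl⟩
          rw [← hsl, ← LBTree.card_labels, hSl, card_val]
      · simp [not_nonempty_iff_eq_empty.mp hA]

theorem card_incLabellings_node {l r : BTree} {A : Finset ℕ} (hA : A.Nonempty) :
    #(incLabellings (.node l r) A) =
      ∑ S ∈ (A.erase (A.min' hA)).powersetCard l.size,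
        #(incLabellings l S) * #(incLabellings r (A.erase (A.min' hA) \ S)) := by
  rw [incLabellings, dif_pos hA, card_biUnion]
  · refine sum_congr rfl fun S _ => ?_
    rw [card_image_of_injective _ fun p q h => by cases p; cases q; simpa using h, card_product]
  · intro S _ S' _ hne
    refine disjoint_left.mpr fun t ht ht' => hne ?_
    simp only [mem_image, mem_product] at ht ht'
    obtain ⟨p, ⟨hp, -⟩, rfl⟩ := ht
    obtain ⟨q, ⟨hq, -⟩, hpq⟩ := ht'
    obtain ⟨-, hpq, -⟩ := LBTree.node.inj hpq
    apply val_injective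
    rw [← (mem_incLabellings.mp hp).2.1, ← (mem_incLabellings.mp hq).2.1, hpq]

theorem hookProd_mul_card_incLabellings (s : BTree) {A : Finset ℕ} (hA : #A = s.size) :
    s.hookProd * #(incLabellings s A) = s.size ! := by
  induction s generalizing A with
  | nil => simp [card_eq_zero.mp hA, incLabellings, BTree.hookProd, BTree.size]
  | node l r ihl ihr =>
    have hne : A.Nonempty := card_pos.mp (by rw [hA, BTree.size]; omega)
    set E := A.erase (A.min' hne)
    have hE : #E = l.size + r.size := by
      rw [card_erase_of_mem (min'_mem _ _), hA, BTree.size]; omega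
    have hterm : ∀ S ∈ E.powersetCard l.size,
        (l.size + r.size + 1) * (l.hookProd * #(incLabellings l S)) *
          (r.hookProd * #(incLabellings r (E \ S))) =
          (l.size + r.size + 1) * l.size ! * r.size ! := by
      intro S hS
      rw [mem_powersetCard] at hS
      rw [ihl hS.2, ihr (by rw [card_sdiff_of_subset hS.1, hE, hS.2]; omega), mul_assoc]
    have hsize : (BTree.node l r).size = l.size + r.size + 1 := by rw [BTree.size]; ring
    calc (BTree.node l r).hookProd * #(incLabellings (.node l r) A)
        = ∑ S ∈ E.powersetCard l.size, (l.size + r.size + 1) * (l.hookProd * #(incLabellings l S)) *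
            (r.hookProd * #(incLabellings r (E \ S))) := by
          rw [card_incLabellings_node hne, mul_sum, BTree.hookProd, hsize]
          exact sum_congr rfl fun _ _ => by ring
      _ = (l.size + r.size).choose l.size * ((l.size + r.size + 1) * l.size ! * r.size !) := by
          rw [sum_congr rfl hterm, sum_const, card_powersetCard, hE, smul_eq_mul]
      _ = (BTree.node l r).size ! := by
          rw [hsize, Nat.factorial_succ, ← Nat.add_choose_mul_factorial_mul_factorial,
            Nat.choose_symm_add]
          ring

theorem lcount_eq_card_incLabellings (s : BTree) :
    lcount s = #(incLabellings s ((range s.size).map (addRightEmbedding 1))) := by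
  rw [lcount, ← Set.ncard_coe_finset]
  congr 1
  ext t
  simp only [Set.mem_ofPred_eq, mem_coe, mem_incLabellings, map_val, range_val]
  rfl

theorem hookProd_mul_lcount (s : BTree) : s.hookProd * lcount s = s.size ! := by
  rw [lcount_eq_card_incLabellings,
    hookProd_mul_card_incLabellings _ (by rw [card_map, card_range])]

theorem Nat.centralBinom_mul_factorial (n : ℕ) : n.centralBinom * n ! = 2 ^ n * (2 * n - 1)‼ := by
  induction n with
  | zero => simp
  | succ n ih =>
    have hrec := Nat.succ_mul_centralBinom_succ n
    have hodd : (2 * (n + 1) - 1)‼ = (2 * n + 1) * (2 * n - 1)‼ := by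
      rw [show 2 * (n + 1) - 1 = 2 * n + 1 by omega, Nat.doubleFactorial_add_one]
    rw [Nat.factorial_succ, hodd, pow_succ]
    calc (n + 1).centralBinom * ((n + 1) * n !) = (n + 1) * (n + 1).centralBinom * n ! := by ring
      _ = 2 * (2 * n + 1) * (n.centralBinom * n !) := by rw [hrec]; ring
      _ = _ := by rw [ih]; ring

namespace BTree

def ofBinaryTree : BinaryTree Unit → BTree
  | .nil => .node .nil .nil
  | .node _ a b => .node (ofBinaryTree a) (ofBinaryTree b)

theorem ofBinaryTree_ne_nil (x : BinaryTree Unit) : ofBinaryTree x ≠ nil := by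
  cases x <;> simp [ofBinaryTree]

theorem ofBinaryTree_injective : Function.Injective ofBinaryTree := by
  intro x y h
  induction x generalizing y with
  | nil =>
    cases y with
    | nil => rfl
    | node _ a b => exact absurd (node.inj h).1.symm (ofBinaryTree_ne_nil a)
  | node _ a b iha ihb =>
    cases y with
    | nil => exact absurd (node.inj h).1 (ofBinaryTree_ne_nil a)
    | node _ a' b' =>
      simp only [ofBinaryTree, node.injEq] at h
      rw [iha h.1, ihb h.2]

theorem complete_ofBinaryTree (x : BinaryTree Unit) : (ofBinaryTree x).Complete := by
  induction x with
  | nil => exact .leaf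
  | node _ a b iha ihb => exact .node (ofBinaryTree_ne_nil a) (ofBinaryTree_ne_nil b) iha ihb

theorem size_ofBinaryTree (x : BinaryTree Unit) : (ofBinaryTree x).size = 2 * x.numNodes + 1 := by
  induction x with
  | nil => rfl
  | node _ a b iha ihb =>
    simp only [ofBinaryTree, size, BinaryTree.numNodes, iha, ihb]
    ring

theorem Complete.mem_range_ofBinaryTree {s : BTree} (hs : s.Complete) (hne : s ≠ .nil) :
    s ∈ Set.range ofBinaryTree := by
  induction hs with
  | nil => contradiction
  | leaf => exact ⟨.nil, rfl⟩
  | node hl hr _ _ ihl ihr =>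
    obtain ⟨a, rfl⟩ := ihl hl
    obtain ⟨b, rfl⟩ := ihr hr
    exact ⟨.node () a b, rfl⟩

theorem setOf_complete_size_eq (n : ℕ) :
    {s : BTree | s.Complete ∧ s.size = 2 * n + 1} =
      ofBinaryTree '' {x | x.numNodes = n} := by
  ext s
  constructor
  · rintro ⟨hs, hsize⟩
    obtain ⟨x, rfl⟩ := hs.mem_range_ofBinaryTree (by rintro rfl; simp [size] at hsize)
    refine ⟨x, ?_, rfl⟩
    rw [size_ofBinaryTree] at hsize
    simpa using hsize
  · rintro ⟨x, rfl, rfl⟩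
    exact ⟨complete_ofBinaryTree x, size_ofBinaryTree x⟩

end BTree

/-- Summing `H(s̄) * T(s̄)` over the pivoting classes amounts to summing `H(s) * #L(s)` over all
complete binary trees `s` with `2n+1` vertices, so the identity is stated multiplied by
`2 ^ (2n)`. -/
theorem weighted_genocchi (n : ℕ) :
    (n + 1) * ∑ᶠ s ∈ {s : BTree | s.Complete ∧ s.size = 2 * n + 1}, s.hookProd * lcount s =
      2 ^ (2 * n) * (Nat.doubleFactorial (2 * n - 1) * Nat.doubleFactorial (2 * n + 1)) := by
  have hterm : ∀ x ∈ BinaryTree.treesOfNumNodesEq n,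
      (BTree.ofBinaryTree x).hookProd * lcount (BTree.ofBinaryTree x) = (2 * n + 1)! := by
    intro x hx
    rw [hookProd_mul_lcount, BTree.size_ofBinaryTree, BinaryTree.mem_treesOfNumNodesEq.mp hx]
  rw [BTree.setOf_complete_size_eq, finsum_mem_image BTree.ofBinaryTree_injective.injOn,
    ← BinaryTree.coe_treesOfNumNodesEq, finsum_mem_coe_finset, sum_congr rfl hterm, sum_const,
    BinaryTree.treesOfNumNodesEq_card_eq_catalan, smul_eq_mul, ← mul_assoc,
    succ_mul_catalan_eq_centralBinom, Nat.factorial_eq_mul_doubleFactorial,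
    Nat.doubleFactorial_two_mul]
  calc n.centralBinom * ((2 * n + 1)‼ * (2 ^ n * n !))
      = 2 ^ n * (n.centralBinom * n !) * (2 * n + 1)‼ := by ring
    _ = 2 ^ (2 * n) * ((2 * n - 1)‼ * (2 * n + 1)‼) := by
      rw [Nat.centralBinom_mul_factorial, two_mul, pow_add]; ring
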